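/- arXiv:2005.11536 — 5 statements merged into one kernel-verified Lean document; each statement's English description precedes it below -/
import Mathlib

section
/- For any partition p = (p_1, p_2, …) with dual partition q = ᵗp, one has Σ_{i≥1} (i−1)·p_i^odd = Σ_{j odd} (q_j^odd)² + Σ_{j even} q_j^odd(q_j^odd − 1), where the first sum on the right is over odd column indices j and the second over even column indices j. -/
/-- The number of odd boxes in row `i` of the Young diagram of `p`:
boxes `(i,j)` with `1 ≤ j ≤ p i` and `i + j` odd. -/
def rowOdd (p : ℕ → ℕ) (i : ℕ) : ℕ :=
  ((Finset.Icc 1 (p i)).filter fun j => Odd (i + j)).card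

/-- The number of odd boxes in column `j` of the Young diagram, where `q` is
the dual partition: boxes `(i,j)` with `1 ≤ i ≤ q j` and `i + j` odd. -/
def colOdd (q : ℕ → ℕ) (j : ℕ) : ℕ :=
  ((Finset.Icc 1 (q j)).filter fun i => Odd (i + j)).card

lemma icc_succ (n : ℕ) : Finset.Icc 1 (n+1) = insert (n+1) (Finset.Icc 1 n) := by
  ext x; simp [Finset.mem_Icc]; omega

lemma aux_card_even (c : ℕ) : ((Finset.Icc 1 c).filter fun i => Even i).card = c / 2 := by
  induction c with
  | zero => simp
  | succ n ih =>
    rw [icc_succ, Finset.filter_insert]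
    by_cases h : Even (n+1)
    · rw [if_pos h, Finset.card_insert_of_notMem (by simp)]
      rw [ih]
      rcases h with ⟨m, hm⟩; omega
    · rw [if_neg h, ih]
      rcases Nat.not_even_iff_odd.mp h with ⟨m, hm⟩; omega

lemma aux_card_odd (c : ℕ) : ((Finset.Icc 1 c).filter fun i => Odd i).card = (c+1) / 2 := by
  induction c with
  | zero => simp
  | succ n ih =>
    rw [icc_succ, Finset.filter_insert]
    by_cases h : Odd (n+1)
    · rw [if_pos h, Finset.card_insert_of_notMem (by simp), ih]
      rcases h with ⟨m, hm⟩; omega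
    · rw [if_neg h, ih]
      rcases Nat.not_odd_iff_even.mp h with ⟨m, hm⟩; omega

lemma aux_sum_even (c : ℕ) :
    (∑ i ∈ (Finset.Icc 1 c).filter (fun i => Even i), (i - 1)) = (c / 2) ^ 2 := by
  induction c with
  | zero => simp
  | succ n ih =>
    rw [icc_succ, Finset.filter_insert]
    by_cases h : Even (n+1)
    · rw [if_pos h, Finset.sum_insert (by simp), ih]
      rcases h with ⟨m, hm⟩
      rcases m with _ | k
      · omega
      · have h1 : n / 2 = k := by omega
        have h2 : (n+1) / 2 = k + 1 := by omega
        rw [h1, h2]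
        have h3 : n + 1 - 1 = 2*k + 1 := by omega
        rw [h3]; ring
    · rw [if_neg h, ih]
      rcases Nat.not_even_iff_odd.mp h with ⟨m, hm⟩
      have h1 : n / 2 = m := by omega
      have h2 : (n+1) / 2 = m := by omega
      rw [h1, h2]

lemma aux_sum_odd (c : ℕ) :
    (∑ i ∈ (Finset.Icc 1 c).filter (fun i => Odd i), (i - 1)) =
      ((c+1) / 2) * ((c+1) / 2 - 1) := by
  induction c with
  | zero => simp
  | succ n ih =>
    rw [icc_succ, Finset.filter_insert]
    by_cases h : Odd (n+1)
    · rw [if_pos h, Finset.sum_insert (by simp), ih]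
      rcases h with ⟨m, hm⟩
      have h1 : (n+1) / 2 = m := by omega
      have h2 : (n+1+1) / 2 = m + 1 := by omega
      rw [h1, h2]
      have h3 : n + 1 - 1 = 2*m := by omega
      rw [h3]
      rcases m with _ | k
      · simp
      · have h4 : k + 1 - 1 = k := rfl
        have h5 : k + 1 + 1 - 1 = k + 1 := rfl
        rw [h4, h5]; ring
    · rw [if_neg h, ih]
      rcases Nat.not_odd_iff_even.mp h with ⟨m, hm⟩
      have h1 : (n+1) / 2 = m := by omega
      have h2 : (n+1+1) / 2 = m := by omega
      rw [h1, h2]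

lemma odd_add_iff_even' {i j : ℕ} (hj : Odd j) : Odd (i + j) ↔ Even i := by
  rcases hj with ⟨m, hm⟩
  rw [Nat.odd_iff, Nat.even_iff]; omega

lemma odd_add_iff_odd' {i j : ℕ} (hj : Even j) : Odd (i + j) ↔ Odd i := by
  rcases hj with ⟨m, hm⟩
  rw [Nat.odd_iff, Nat.odd_iff]; omega

/-- For any partition `p` with dual partition `q`,
`Σ_{i≥1} (i−1)·p_i^odd = Σ_{j odd} (q_j^odd)² + Σ_{j even} q_j^odd(q_j^odd − 1)`. -/
theorem partition_dual_sum_odd (p q : ℕ → ℕ)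
    (hdec : ∀ i, 1 ≤ i → p (i + 1) ≤ p i)
    (hfin : ∃ N, ∀ i, N ≤ i → p i = 0)
    (hq : ∀ j, 1 ≤ j → q j = Set.ncard {i : ℕ | 1 ≤ i ∧ j ≤ p i}) :
    ∑ᶠ (i : ℕ) (_ : 1 ≤ i), (i - 1) * rowOdd p i =
      (∑ᶠ (j : ℕ) (_ : 1 ≤ j ∧ Odd j), colOdd q j ^ 2) +
        ∑ᶠ (j : ℕ) (_ : 1 ≤ j ∧ Even j), colOdd q j * (colOdd q j - 1) := by
  classical
  obtain ⟨N, hN⟩ := hfin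
  have pstep : ∀ k i : ℕ, 1 ≤ i → p (i + k) ≤ p i := by
    intro k
    induction k with
    | zero => intro i _; exact le_rfl
    | succ n ih =>
      intro i hi
      have h1 : p (i + n + 1) ≤ p (i + n) := hdec _ (by omega)
      have h2 := ih i hi
      have e : i + (n + 1) = i + n + 1 := by omega
      rw [e]; omega
  have pmono : ∀ i i' : ℕ, 1 ≤ i → i ≤ i' → p i' ≤ p i := by
    intro i i' hi hii
    obtain ⟨k, rfl⟩ := Nat.exists_eq_add_of_le hii
    exact pstep k i hi
  have hsmall : ∀ i, p i ≠ 0 → i ≤ N := by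
    intro i hpi
    by_contra hc
    exact hpi (hN i (by omega))
  have hqcard : ∀ j, 1 ≤ j → q j = ((Finset.Icc 1 N).filter fun i => j ≤ p i).card := by
    intro j hj
    rw [hq j hj]
    have hset : {i : ℕ | 1 ≤ i ∧ j ≤ p i} = ↑((Finset.Icc 1 N).filter fun i => j ≤ p i) := by
      ext i
      simp only [Set.mem_setOf_eq, Finset.coe_filter, Finset.mem_Icc]
      constructor
      · rintro ⟨h1, h2⟩
        exact ⟨⟨h1, hsmall i (by omega)⟩, h2⟩
      · rintro ⟨⟨h1, _⟩, h2⟩; exact ⟨h1, h2⟩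
    rw [hset, Set.ncard_coe_finset]
  have hqN : ∀ j, 1 ≤ j → q j ≤ N := by
    intro j hj
    rw [hqcard j hj]
    calc ((Finset.Icc 1 N).filter fun i => j ≤ p i).card
        ≤ (Finset.Icc 1 N).card := Finset.card_filter_le _ _
      _ = N := by rw [Nat.card_Icc]; omega
  have key : ∀ i j, 1 ≤ i → 1 ≤ j → (j ≤ p i ↔ i ≤ q j) := by
    intro i j hi hj
    rw [hqcard j hj]
    constructor
    · intro hji
      have hsub : Finset.Icc 1 i ⊆ (Finset.Icc 1 N).filter fun i' => j ≤ p i' := by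
        intro x hx
        rw [Finset.mem_Icc] at hx
        have hp : j ≤ p x := le_trans hji (pmono x i hx.1 hx.2)
        rw [Finset.mem_filter, Finset.mem_Icc]
        exact ⟨⟨hx.1, hsmall x (by omega)⟩, hp⟩
      have hc := Finset.card_le_card hsub
      rw [Nat.card_Icc] at hc
      omega
    · intro hcard
      by_contra hc
      push_neg at hc
      have hsub : ((Finset.Icc 1 N).filter fun i' => j ≤ p i') ⊆ Finset.Icc 1 (i - 1) := by
        intro x hx
        rw [Finset.mem_filter, Finset.mem_Icc] at hx
        rw [Finset.mem_Icc]
        refine ⟨hx.1.1, ?_⟩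
        by_contra hxi
        push_neg at hxi
        have := pmono i x hi (by omega)
        omega
      have hc2 := Finset.card_le_card hsub
      rw [Nat.card_Icc] at hc2
      omega
  have hqM : ∀ j, 1 ≤ j → colOdd q j ≠ 0 → j ≤ p 1 := by
    intro j hj hc
    have hq1 : 1 ≤ q j := by
      by_contra h
      have h0 : q j = 0 := by omega
      apply hc
      simp [colOdd, h0]
    exact (key 1 j le_rfl hj).mpr hq1
  -- Step 1: LHS as a finite sum
  have hL : (∑ᶠ (i : ℕ) (_ : 1 ≤ i), (i - 1) * rowOdd p i)
      = ∑ i ∈ Finset.Icc 1 N, (i - 1) * rowOdd p i := by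
    apply finsum_cond_eq_sum_of_cond_iff
    intro i hi
    rw [Finset.mem_Icc]
    constructor
    · intro h1
      refine ⟨h1, ?_⟩
      apply hsmall
      intro hp0
      apply hi
      simp [rowOdd, hp0]
    · intro h; exact h.1
  -- Step 2: row expansion
  have hrow : ∀ i ∈ Finset.Icc 1 N, (i - 1) * rowOdd p i
      = ∑ j ∈ Finset.Icc 1 (p 1), if j ≤ p i ∧ Odd (i + j) then (i - 1) else 0 := by
    intro i hi
    rw [Finset.mem_Icc] at hi
    have e1 : (Finset.Icc 1 (p 1)).filter (fun j => j ≤ p i ∧ Odd (i + j))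
        = (Finset.Icc 1 (p i)).filter (fun j => Odd (i + j)) := by
      ext j
      simp only [Finset.mem_filter, Finset.mem_Icc]
      constructor
      · rintro ⟨⟨h1, h2⟩, h3, h4⟩; exact ⟨⟨h1, h3⟩, h4⟩
      · rintro ⟨⟨h1, h2⟩, h3⟩
        exact ⟨⟨h1, le_trans h2 (pmono 1 i le_rfl hi.1)⟩, h2, h3⟩
    calc (i - 1) * rowOdd p i
        = ∑ _j ∈ (Finset.Icc 1 (p i)).filter (fun j => Odd (i + j)), (i - 1) := by
          rw [Finset.sum_const, smul_eq_mul, mul_comm]; rfl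
      _ = ∑ _j ∈ (Finset.Icc 1 (p 1)).filter (fun j => j ≤ p i ∧ Odd (i + j)), (i - 1) := by
          rw [e1]
      _ = ∑ j ∈ Finset.Icc 1 (p 1), if j ≤ p i ∧ Odd (i + j) then (i - 1) else 0 :=
          Finset.sum_filter _ _
  -- Step 4: per-column value
  have hcol : ∀ j ∈ Finset.Icc 1 (p 1),
      (∑ i ∈ Finset.Icc 1 N, if j ≤ p i ∧ Odd (i + j) then (i - 1) else 0)
      = ∑ i ∈ (Finset.Icc 1 (q j)).filter (fun i => Odd (i + j)), (i - 1) := by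
    intro j hj
    rw [Finset.mem_Icc] at hj
    have e2 : ∀ i ∈ Finset.Icc 1 N,
        (if j ≤ p i ∧ Odd (i + j) then (i - 1) else 0)
        = (if i ≤ q j ∧ Odd (i + j) then (i - 1) else 0) := by
      intro i hi
      rw [Finset.mem_Icc] at hi
      simp only [key i j hi.1 hj.1]
    rw [Finset.sum_congr rfl e2, ← Finset.sum_filter]
    congr 1
    ext i
    simp only [Finset.mem_filter, Finset.mem_Icc]
    have hqn := hqN j hj.1
    constructor
    · rintro ⟨⟨h1, h2⟩, h3, h4⟩; exact ⟨⟨h1, h3⟩, h4⟩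
    · rintro ⟨⟨h1, h2⟩, h3⟩; exact ⟨⟨h1, by omega⟩, h2, h3⟩
  -- Step 5: evaluate per column
  have hoddval : ∀ j : ℕ, Odd j →
      (∑ i ∈ (Finset.Icc 1 (q j)).filter (fun i => Odd (i + j)), (i - 1)) = colOdd q j ^ 2 := by
    intro j hj
    have e : (Finset.Icc 1 (q j)).filter (fun i => Odd (i + j))
        = (Finset.Icc 1 (q j)).filter (fun i => Even i) := by
      ext i
      simp only [Finset.mem_filter, odd_add_iff_even' hj]
    simp only [colOdd]
    rw [e, aux_sum_even, aux_card_even]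
  have hevenval : ∀ j : ℕ, Even j →
      (∑ i ∈ (Finset.Icc 1 (q j)).filter (fun i => Odd (i + j)), (i - 1))
      = colOdd q j * (colOdd q j - 1) := by
    intro j hj
    have e : (Finset.Icc 1 (q j)).filter (fun i => Odd (i + j))
        = (Finset.Icc 1 (q j)).filter (fun i => Odd i) := by
      ext i
      simp only [Finset.mem_filter, odd_add_iff_odd' hj]
    simp only [colOdd]
    rw [e, aux_sum_odd, aux_card_odd]
  -- Step 6: RHS as finite sums
  have hR1 : (∑ᶠ (j : ℕ) (_ : 1 ≤ j ∧ Odd j), colOdd q j ^ 2)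
      = ∑ j ∈ (Finset.Icc 1 (p 1)).filter (fun j => Odd j), colOdd q j ^ 2 := by
    apply finsum_cond_eq_sum_of_cond_iff
    intro j hj
    simp only [Finset.mem_filter, Finset.mem_Icc]
    constructor
    · rintro ⟨h1, h2⟩
      have hcne : colOdd q j ≠ 0 := fun h0 => hj (by rw [h0]; simp)
      exact ⟨⟨h1, hqM j h1 hcne⟩, h2⟩
    · rintro ⟨⟨h1, h2⟩, h3⟩; exact ⟨h1, h3⟩
  have hR2 : (∑ᶠ (j : ℕ) (_ : 1 ≤ j ∧ Even j), colOdd q j * (colOdd q j - 1))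
      = ∑ j ∈ (Finset.Icc 1 (p 1)).filter (fun j => ¬ Odd j),
          colOdd q j * (colOdd q j - 1) := by
    apply finsum_cond_eq_sum_of_cond_iff
    intro j hj
    simp only [Finset.mem_filter, Finset.mem_Icc]
    constructor
    · rintro ⟨h1, h2⟩
      have hcne : colOdd q j ≠ 0 := fun h0 => hj (by rw [h0]; simp)
      exact ⟨⟨h1, hqM j h1 hcne⟩, Nat.not_odd_iff_even.mpr h2⟩
    · rintro ⟨⟨h1, h2⟩, h3⟩; exact ⟨h1, Nat.not_odd_iff_even.mp h3⟩
  -- Assemble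
  rw [hL, hR1, hR2]
  rw [Finset.sum_congr rfl hrow, Finset.sum_comm, Finset.sum_congr rfl hcol]
  rw [← Finset.sum_filter_add_sum_filter_not (Finset.Icc 1 (p 1)) (fun j => Odd j)]
  congr 1
  · apply Finset.sum_congr rfl
    intro j hj
    rw [Finset.mem_filter] at hj
    exact hoddval j hj.2
  · apply Finset.sum_congr rfl
    intro j hj
    rw [Finset.mem_filter] at hj
    exact hevenval j (Nat.not_odd_iff_even.mp hj.2)
end

section
/- For any partition p = (p_1, p_2, …) with dual partition q = ᵗp, one has Σ_{i≥1} (i−1)·p_i^ev = Σ_{j odd} q_j^ev(q_j^ev − 1) + Σ_{j even} (q_j^ev)², where the first sum on the right is over odd column indices j and the second over even column indices j. -/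
/-- The number of even boxes in row `i` of the Young diagram of `p`:
boxes `(i,j)` with `1 ≤ j ≤ p i` and `i + j` even. -/
def rowEv (p : ℕ → ℕ) (i : ℕ) : ℕ :=
  ((Finset.Icc 1 (p i)).filter fun j => Even (i + j)).card

/-- The number of even boxes in column `j` of the Young diagram, where `q` is
the dual partition: boxes `(i,j)` with `1 ≤ i ≤ q j` and `i + j` even. -/
def colEv (q : ℕ → ℕ) (j : ℕ) : ℕ :=
  ((Finset.Icc 1 (q j)).filter fun i => Even (i + j)).card

lemma aux_oddCol (h : ℕ) :
    ((Finset.Icc 1 h).filter (fun i => Odd i)).card = (h+1)/2 ∧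
    (∑ i ∈ (Finset.Icc 1 h).filter (fun i => Odd i), (i-1)) = ((h+1)/2) * ((h+1)/2 - 1) := by
  induction h with
  | zero => simp
  | succ n ih =>
    obtain ⟨hc, hs⟩ := ih
    have hI : Finset.Icc 1 (n+1) = insert (n+1) (Finset.Icc 1 n) := by
      ext x; simp [Finset.mem_Icc, Finset.mem_insert]; omega
    by_cases hpar : Odd (n+1)
    · have hm : (n+1) % 2 = 1 := Nat.odd_iff.mp hpar
      obtain ⟨k, hk⟩ : ∃ k, n = 2*k := ⟨n/2, by omega⟩
      have hni : (n+1) ∉ (Finset.Icc 1 n).filter (fun i => Odd i) := by simp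
      rw [hI, Finset.filter_insert, if_pos hpar, Finset.card_insert_of_notMem hni,
        Finset.sum_insert hni, hc, hs]
      have e1 : (n+1)/2 = k := by omega
      have e2 : (n+1+1)/2 = k+1 := by omega
      rw [e1, e2]
      refine ⟨rfl, ?_⟩
      cases k with
      | zero => simp [hk]
      | succ m =>
        have : n + 1 - 1 = n := rfl
        simp only [Nat.succ_sub_one, this]
        subst hk; ring
    · have hm : (n+1) % 2 = 0 := by
        rcases Nat.even_or_odd (n+1) with h|h
        · exact Nat.even_iff.mp h
        · exact absurd h hpar
      rw [hI, Finset.filter_insert, if_neg hpar, hc, hs]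
      have e : (n+1+1)/2 = (n+1)/2 := by omega
      rw [e]; exact ⟨rfl, rfl⟩

lemma aux_evenCol (h : ℕ) :
    ((Finset.Icc 1 h).filter (fun i => Even i)).card = h/2 ∧
    (∑ i ∈ (Finset.Icc 1 h).filter (fun i => Even i), (i-1)) = (h/2)^2 := by
  induction h with
  | zero => simp
  | succ n ih =>
    obtain ⟨hc, hs⟩ := ih
    have hI : Finset.Icc 1 (n+1) = insert (n+1) (Finset.Icc 1 n) := by
      ext x; simp [Finset.mem_Icc, Finset.mem_insert]; omega
    by_cases hpar : Even (n+1)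
    · have hm : (n+1) % 2 = 0 := Nat.even_iff.mp hpar
      obtain ⟨k, hk⟩ : ∃ k, n = 2*k+1 := ⟨n/2, by omega⟩
      have hni : (n+1) ∉ (Finset.Icc 1 n).filter (fun i => Even i) := by simp
      rw [hI, Finset.filter_insert, if_pos hpar, Finset.card_insert_of_notMem hni,
        Finset.sum_insert hni, hc, hs]
      have e1 : n/2 = k := by omega
      have e2 : (n+1)/2 = k+1 := by omega
      rw [e1, e2]
      refine ⟨rfl, ?_⟩
      have : n + 1 - 1 = n := rfl
      rw [this]; subst hk; ring
    · have hm : (n+1) % 2 = 1 := by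
        rcases Nat.even_or_odd (n+1) with h|h
        · exact absurd h hpar
        · exact Nat.odd_iff.mp h
      rw [hI, Finset.filter_insert, if_neg hpar, hc, hs]
      have e : (n+1)/2 = n/2 := by omega
      rw [e]; exact ⟨rfl, rfl⟩

/-- Per-column computation, odd column. -/
lemma aux_col_odd (h j : ℕ) (hj : Odd j) :
    (∑ i ∈ (Finset.Icc 1 h).filter (fun i => Even (i+j)), (i-1)) =
      ((Finset.Icc 1 h).filter (fun i => Even (i+j))).card *
      (((Finset.Icc 1 h).filter (fun i => Even (i+j))).card - 1) := by
  have hfe : (Finset.Icc 1 h).filter (fun i => Even (i+j)) =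
      (Finset.Icc 1 h).filter (fun i => Odd i) := by
    apply Finset.filter_congr
    intro x _
    simp only [Nat.even_add, eq_iff_iff]
    constructor
    · intro hx
      rcases Nat.even_or_odd x with he|ho
      · exact absurd (hx.mp he) (Nat.not_even_iff_odd.mpr hj)
      · exact ho
    · intro hx
      constructor
      · intro he; exact absurd he (Nat.not_even_iff_odd.mpr hx)
      · intro he; exact absurd he (Nat.not_even_iff_odd.mpr hj)
  rw [hfe, (aux_oddCol h).1, (aux_oddCol h).2]

/-- Per-column computation, even column. -/
lemma aux_col_even (h j : ℕ) (hj : Even j) :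
    (∑ i ∈ (Finset.Icc 1 h).filter (fun i => Even (i+j)), (i-1)) =
      ((Finset.Icc 1 h).filter (fun i => Even (i+j))).card ^ 2 := by
  have hfe : (Finset.Icc 1 h).filter (fun i => Even (i+j)) =
      (Finset.Icc 1 h).filter (fun i => Even i) := by
    apply Finset.filter_congr
    intro x _
    simp only [Nat.even_add, eq_iff_iff]
    constructor
    · intro hx; exact hx.mpr hj
    · intro hx; exact ⟨fun _ => hj, fun _ => hx⟩
  rw [hfe, (aux_evenCol h).1, (aux_evenCol h).2]

/-- For any partition `p` with dual partition `q`,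
`Σ_{i≥1} (i−1)·p_i^ev = Σ_{j odd} q_j^ev(q_j^ev − 1) + Σ_{j even} (q_j^ev)²`. -/
theorem partition_dual_sum_even (p q : ℕ → ℕ)
    (hdec : ∀ i, 1 ≤ i → p (i + 1) ≤ p i)
    (hfin : ∃ N, ∀ i, N ≤ i → p i = 0)
    (hq : ∀ j, 1 ≤ j → q j = Set.ncard {i : ℕ | 1 ≤ i ∧ j ≤ p i}) :
    ∑ᶠ (i : ℕ) (_ : 1 ≤ i), (i - 1) * rowEv p i =
      (∑ᶠ (j : ℕ) (_ : 1 ≤ j ∧ Odd j), colEv q j * (colEv q j - 1)) +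
        ∑ᶠ (j : ℕ) (_ : 1 ≤ j ∧ Even j), colEv q j ^ 2 := by
  obtain ⟨N, hN⟩ := hfin
  -- monotonicity
  have anti : ∀ a b, 1 ≤ a → a ≤ b → p b ≤ p a := by
    intro a b ha hab
    induction b with
    | zero => omega
    | succ n ih =>
      rcases Nat.lt_or_ge a (n+1) with h|h
      · exact le_trans (hdec n (by omega)) (ih (by omega))
      · have : a = n + 1 := by omega
        simp [this]
  -- the key duality
  have key : ∀ j, 1 ≤ j → ∀ i, 1 ≤ i → (j ≤ p i ↔ i ≤ q j) := by
    intro j hj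
    set S : Set ℕ := {i : ℕ | 1 ≤ i ∧ j ≤ p i} with hS
    have hsub : S ⊆ ↑(Finset.Icc 1 N) := by
      intro i hi
      simp only [hS, Set.mem_setOf_eq] at hi
      simp only [Finset.coe_Icc, Set.mem_Icc]
      refine ⟨hi.1, ?_⟩
      by_contra h
      have := hN i (by omega)
      omega
    have hfinS : S.Finite := Set.Finite.subset (Finset.Icc 1 N).finite_toSet hsub
    have hdown : ∀ i ∈ S, ∀ i', 1 ≤ i' → i' ≤ i → i' ∈ S := by
      intro i hi i' h1 h2
      exact ⟨h1, le_trans hi.2 (anti i' i h1 h2)⟩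
    have key0 : ∀ i, 1 ≤ i → (i ∈ S ↔ i ≤ S.ncard) := by
      intro i hi
      constructor
      · intro h
        have hsub2 : ↑(Finset.Icc 1 i) ⊆ S := by
          intro x hx
          simp only [Finset.coe_Icc, Set.mem_Icc] at hx
          exact hdown i h x hx.1 hx.2
        calc i = (Finset.Icc 1 i).card := by simp
          _ = (↑(Finset.Icc 1 i) : Set ℕ).ncard := (Set.ncard_coe_finset _).symm
          _ ≤ S.ncard := Set.ncard_le_ncard hsub2 hfinS
      · intro h
        by_contra hns
        have hsub2 : S ⊆ ↑(Finset.Icc 1 (i-1)) := by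
          intro x hx
          simp only [Finset.coe_Icc, Set.mem_Icc]
          refine ⟨hx.1, ?_⟩
          by_contra hxx
          exact hns (hdown x hx i hi (by omega))
        have : S.ncard ≤ (Finset.Icc 1 (i-1)).card := by
          rw [← Set.ncard_coe_finset]
          exact Set.ncard_le_ncard hsub2 (Finset.Icc 1 (i-1)).finite_toSet
        simp at this
        omega
    intro i hi
    rw [hq j hj]
    constructor
    · intro h; exact (key0 i hi).mp ⟨hi, h⟩
    · intro h; exact ((key0 i hi).mpr h).2
  set M := N + p 1 + 1 with hM
  -- bounds
  have hrow0 : ∀ i, 1 ≤ i → rowEv p i ≠ 0 → i ≤ M := by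
    intro i hi h
    by_contra hc
    have : p i = 0 := hN i (by omega)
    simp [rowEv, this] at h
  have hpM : ∀ i, 1 ≤ i → p i ≤ M := by
    intro i hi
    exact le_trans (anti 1 i le_rfl hi) (by omega)
  have hqM : ∀ j, 1 ≤ j → q j ≤ M := by
    intro j hj
    rcases Nat.eq_zero_or_pos (q j) with h|h
    · omega
    · have : j ≤ p (q j) := (key j hj (q j) h).mpr le_rfl
      by_contra hc
      have : p (q j) = 0 := hN (q j) (by omega)
      omega
  have hcol0 : ∀ j, 1 ≤ j → colEv q j ≠ 0 → j ≤ M := by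
    intro j hj h
    rcases Nat.eq_zero_or_pos (q j) with h0|h0
    · simp [colEv, h0] at h
    · have : j ≤ p 1 := (key j hj 1 le_rfl).mpr h0
      omega
  -- convert finsums to finite sums
  rw [finsum_cond_eq_sum_of_cond_iff (fun i => (i - 1) * rowEv p i)
      (t := Finset.Icc 1 M) (by
        intro x hx
        simp only [Finset.mem_Icc]
        constructor
        · intro h1
          refine ⟨h1, ?_⟩
          have : rowEv p x ≠ 0 := by
            intro h0; apply hx; simp [h0]
          exact hrow0 x h1 this
        · intro h; exact h.1),
    finsum_cond_eq_sum_of_cond_iff (fun j => colEv q j * (colEv q j - 1))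
      (t := (Finset.Icc 1 M).filter (fun j => Odd j)) (by
        intro x hx
        simp only [Finset.mem_filter, Finset.mem_Icc]
        constructor
        · intro h1
          refine ⟨⟨h1.1, ?_⟩, h1.2⟩
          have : colEv q x ≠ 0 := by
            intro h0; apply hx; simp [h0]
          exact hcol0 x h1.1 this
        · intro h; exact ⟨h.1.1, h.2⟩),
    finsum_cond_eq_sum_of_cond_iff (fun j => colEv q j ^ 2)
      (t := (Finset.Icc 1 M).filter (fun j => Even j)) (by
        intro x hx
        simp only [Finset.mem_filter, Finset.mem_Icc]
        constructor
        · intro h1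
          refine ⟨⟨h1.1, ?_⟩, h1.2⟩
          have : colEv q x ≠ 0 := by
            intro h0; apply hx; simp [h0]
          exact hcol0 x h1.1 this
        · intro h; exact ⟨h.1.1, h.2⟩)]
  -- now all sums are over Finsets
  have lhs_eq : ∑ i ∈ Finset.Icc 1 M, (i - 1) * rowEv p i =
      ∑ j ∈ Finset.Icc 1 M, ∑ i ∈ Finset.Icc 1 M,
        (if j ≤ p i ∧ Even (i + j) then i - 1 else 0) := by
    rw [Finset.sum_comm]
    apply Finset.sum_congr rfl
    intro i hi
    simp only [Finset.mem_Icc] at hi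
    have hfe : (Finset.Icc 1 (p i)).filter (fun j => Even (i + j)) =
        (Finset.Icc 1 M).filter (fun j => j ≤ p i ∧ Even (i + j)) := by
      ext x
      simp only [Finset.mem_filter, Finset.mem_Icc]
      have := hpM i hi.1
      constructor
      · rintro ⟨⟨h1, h2⟩, h3⟩
        exact ⟨⟨h1, by omega⟩, h2, h3⟩
      · rintro ⟨⟨h1, _⟩, h3, h4⟩
        exact ⟨⟨h1, h3⟩, h4⟩
    rw [rowEv, hfe, ← Finset.sum_filter, Finset.sum_const, smul_eq_mul, mul_comm]
  have mid : ∀ j ∈ Finset.Icc 1 M,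
      (∑ i ∈ Finset.Icc 1 M, (if j ≤ p i ∧ Even (i + j) then i - 1 else 0)) =
      ∑ i ∈ (Finset.Icc 1 (q j)).filter (fun i => Even (i + j)), (i - 1) := by
    intro j hj
    simp only [Finset.mem_Icc] at hj
    have hfe : (Finset.Icc 1 (q j)).filter (fun i => Even (i + j)) =
        (Finset.Icc 1 M).filter (fun i => j ≤ p i ∧ Even (i + j)) := by
      ext x
      simp only [Finset.mem_filter, Finset.mem_Icc]
      have hqb := hqM j hj.1
      constructor
      · rintro ⟨⟨h1, h2⟩, h3⟩
        exact ⟨⟨h1, by omega⟩, (key j hj.1 x h1).mpr h2, h3⟩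
      · rintro ⟨⟨h1, _⟩, h3, h4⟩
        exact ⟨⟨h1, (key j hj.1 x h1).mp h3⟩, h4⟩
    rw [hfe, Finset.sum_filter]
  rw [lhs_eq, Finset.sum_congr rfl mid,
    ← Finset.sum_filter_add_sum_filter_not (Finset.Icc 1 M) (fun j => Odd j)]
  congr 1
  · apply Finset.sum_congr rfl
    intro j hj
    simp only [Finset.mem_filter] at hj
    exact aux_col_odd (q j) j hj.2
  · have hfe : (Finset.Icc 1 M).filter (fun j => ¬Odd j) =
        (Finset.Icc 1 M).filter (fun j => Even j) := by
      apply Finset.filter_congr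
      intro x _
      simp [Nat.not_odd_iff_even]
    rw [hfe]
    apply Finset.sum_congr rfl
    intro j hj
    simp only [Finset.mem_filter] at hj
    exact aux_col_even (q j) j hj.2
end

section
/- Let x = (x_1,…,x_n) and y = (y_1,…,y_n) be finite sequences in totally ordered sets such that for all 1 ≤ i < j ≤ n: if x_i ≤ x_j then y_i < y_j, and if x_i > x_j then y_i > y_j. Then for every k ≥ 1, c_k(x) = c_k(y) and d_k(x) = d_k(y); consequently the Robinson–Schensted shapes coincide: p(x) = p(y). -/
/-- Greene invariant `c_k(x)` of the length-`N` sequence `x` (positions `1,…,N`):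
the maximal cardinality of a set of positions that can be partitioned into at
most `k` subsets, each of which indexes a weakly increasing subsequence of `x`. -/
noncomputable def greeneC {α : Type*} [LinearOrder α] (N : ℕ) (x : ℕ → α) (k : ℕ) : ℕ :=
  sSup {m : ℕ | ∃ S : Finset ℕ, (∀ i ∈ S, 1 ≤ i ∧ i ≤ N) ∧ m = S.card ∧
    ∃ f : ℕ → Fin k, ∀ i ∈ S, ∀ j ∈ S, i < j → f i = f j → x i ≤ x j}

/-- Greene invariant `d_k(x)`: the maximal cardinality of a set of positions that
can be partitioned into at most `k` subsets, each of which indexes a strictly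
decreasing subsequence of `x`. -/
noncomputable def greeneD {α : Type*} [LinearOrder α] (N : ℕ) (x : ℕ → α) (k : ℕ) : ℕ :=
  sSup {m : ℕ | ∃ S : Finset ℕ, (∀ i ∈ S, 1 ≤ i ∧ i ≤ N) ∧ m = S.card ∧
    ∃ f : ℕ → Fin k, ∀ i ∈ S, ∀ j ∈ S, i < j → f i = f j → x j < x i}

/-- The Robinson–Schensted shape of `x`, via Greene's theorem:
`p(x)_k = c_k(x) − c_{k−1}(x)`. -/
noncomputable def rsShape {α : Type*} [LinearOrder α] (N : ℕ) (x : ℕ → α) (k : ℕ) : ℕ :=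
  greeneC N x k - greeneC N x (k - 1)

/-- if `x`, `y` are sequences in totally ordered sets such that for
`1 ≤ i < j ≤ n`, `x_i ≤ x_j → y_i < y_j` and `x_i > x_j → y_i > y_j`, then all
Greene invariants `c_k`, `d_k` coincide, and consequently `p(x) = p(y)`. -/
theorem greene_invariance {α β : Type*} [LinearOrder α] [LinearOrder β] (n : ℕ)
    (x : ℕ → α) (y : ℕ → β)
    (hxy : ∀ i j, 1 ≤ i → i < j → j ≤ n →
      (x i ≤ x j → y i < y j) ∧ (x j < x i → y j < y i)) :
    (∀ k, 1 ≤ k → greeneC n x k = greeneC n y k ∧ greeneD n x k = greeneD n y k) ∧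
      ∀ k, 1 ≤ k → rsShape n x k = rsShape n y k := by
  have key : ∀ i j, 1 ≤ i → i < j → j ≤ n → (x i ≤ x j ↔ y i ≤ y j) := by
    intro i j h1 h2 h3
    obtain ⟨ha, hb⟩ := hxy i j h1 h2 h3
    constructor
    · intro h; exact (ha h).le
    · intro h
      by_contra hc
      exact absurd h (not_le.mpr (hb (not_le.mp hc)))
  have key2 : ∀ i j, 1 ≤ i → i < j → j ≤ n → (x j < x i ↔ y j < y i) := by
    intro i j h1 h2 h3
    obtain ⟨ha, hb⟩ := hxy i j h1 h2 h3
    constructor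
    · exact hb
    · intro h
      by_contra hc
      exact absurd h (not_lt.mpr (ha (not_lt.mp hc)).le)
  have hC : ∀ k, greeneC n x k = greeneC n y k := by
    intro k
    unfold greeneC
    congr 1
    ext m
    simp only [Set.mem_setOf_eq]
    constructor
    · rintro ⟨S, hS, hm, f, hf⟩
      exact ⟨S, hS, hm, f, fun i hi j hj hij hfij =>
        (key i j (hS i hi).1 hij (hS j hj).2).mp (hf i hi j hj hij hfij)⟩
    · rintro ⟨S, hS, hm, f, hf⟩
      exact ⟨S, hS, hm, f, fun i hi j hj hij hfij =>
        (key i j (hS i hi).1 hij (hS j hj).2).mpr (hf i hi j hj hij hfij)⟩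
  have hD : ∀ k, greeneD n x k = greeneD n y k := by
    intro k
    unfold greeneD
    congr 1
    ext m
    simp only [Set.mem_setOf_eq]
    constructor
    · rintro ⟨S, hS, hm, f, hf⟩
      exact ⟨S, hS, hm, f, fun i hi j hj hij hfij =>
        (key2 i j (hS i hi).1 hij (hS j hj).2).mp (hf i hi j hj hij hfij)⟩
    · rintro ⟨S, hS, hm, f, hf⟩
      exact ⟨S, hS, hm, f, fun i hi j hj hij hfij =>
        (key2 i j (hS i hi).1 hij (hS j hj).2).mpr (hf i hi j hj hij hfij)⟩
  exact ⟨fun k _ => ⟨hC k, hD k⟩, fun k _ => by unfold rsShape; rw [hC k, hC (k - 1)]⟩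
end

section
/- Let x = (x_1,…,x_n) be a sequence of nonzero integers with pairwise distinct absolute values such that 1 occurs among x_1,…,x_n, and let tx be the sequence obtained from x by replacing the entry equal to 1 by −1. Then for every k ≥ 1: c_k(⁻x) − c_k(⁻(tx)) ∈ {0, 1} and d_k(⁻x) − d_k(⁻(tx)) ∈ {0, −1}. -/
/-- For a length-`n` sequence `x = (x_1,…,x_n)` (positions `1,…,n`), the length-`2n`
sequence `⁻x = (−x_n,…,−x_1,x_1,…,x_n)` (positions `1,…,2n`). -/
def preMinus (n : ℕ) (x : ℕ → ℤ) : ℕ → ℤ := fun i =>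
  if i ≤ n then -x (n + 1 - i) else x (i - n)

/-- The set appearing in the Greene invariants, abstracted over the chain condition. -/
def GSet (N k : ℕ) (P : ℕ → ℕ → Prop) : Set ℕ :=
  {m : ℕ | ∃ S : Finset ℕ, (∀ i ∈ S, 1 ≤ i ∧ i ≤ N) ∧ m = S.card ∧
    ∃ f : ℕ → Fin k, ∀ i ∈ S, ∀ j ∈ S, i < j → f i = f j → P i j}

lemma gset_zero {N k : ℕ} {P : ℕ → ℕ → Prop} (hk : 1 ≤ k) : 0 ∈ GSet N k P :=
  ⟨∅, by simp, by simp, ⟨fun _ => ⟨0, hk⟩, by simp⟩⟩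

lemma gset_bdd {N k : ℕ} {P : ℕ → ℕ → Prop} : ∀ m ∈ GSet N k P, m ≤ N := by
  rintro m ⟨S, hS, rfl, -⟩
  have hsub : S ⊆ Finset.Icc 1 N := fun i hi => Finset.mem_Icc.2 (hS i hi)
  calc S.card ≤ (Finset.Icc 1 N).card := Finset.card_le_card hsub
    _ = N := by rw [Nat.card_Icc]; omega

lemma gset_bddAbove {N k : ℕ} {P : ℕ → ℕ → Prop} : BddAbove (GSet N k P) :=
  ⟨N, fun m hm => gset_bdd m hm⟩

lemma gset_le {N k : ℕ} {P Q : ℕ → ℕ → Prop} (hk : 1 ≤ k)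
    (himp : ∀ i j, 1 ≤ i → i ≤ N → 1 ≤ j → j ≤ N → i < j → P i j → Q i j) :
    sSup (GSet N k P) ≤ sSup (GSet N k Q) := by
  refine csSup_le_csSup gset_bddAbove ⟨0, gset_zero hk⟩ ?_
  rintro m ⟨S, hS, rfl, f, hf⟩
  exact ⟨S, hS, rfl, f, fun i hi j hj hij hfij =>
    himp i j (hS i hi).1 (hS i hi).2 (hS j hj).1 (hS j hj).2 hij (hf i hi j hj hij hfij)⟩

lemma gset_le_add_one {N k q : ℕ} {P Q : ℕ → ℕ → Prop} (hk : 1 ≤ k)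
    (himp : ∀ i j, 1 ≤ i → i ≤ N → 1 ≤ j → j ≤ N → i < j → j ≠ q → P i j → Q i j) :
    sSup (GSet N k P) ≤ sSup (GSet N k Q) + 1 := by
  have hmem : sSup (GSet N k P) ∈ GSet N k P :=
    Nat.sSup_mem ⟨0, gset_zero hk⟩ gset_bddAbove
  obtain ⟨S, hS, hcard, f, hf⟩ := hmem
  have hmem' : (S.erase q).card ∈ GSet N k Q := by
    refine ⟨S.erase q, fun i hi => hS i (Finset.mem_of_mem_erase hi), rfl, f, ?_⟩
    intro i hi j hj hij hfij
    have hiS := Finset.mem_of_mem_erase hi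
    have hjS := Finset.mem_of_mem_erase hj
    exact himp i j (hS i hiS).1 (hS i hiS).2 (hS j hjS).1 (hS j hjS).2 hij
      (Finset.ne_of_mem_erase hj) (hf i hiS j hjS hij hfij)
  have h1 : (S.erase q).card ≤ sSup (GSet N k Q) := le_csSup gset_bddAbove hmem'
  have h2 : S.card ≤ (S.erase q).card + 1 := by
    by_cases hq : q ∈ S
    · rw [Finset.card_erase_of_mem hq]; omega
    · rw [Finset.erase_eq_of_notMem hq]; omega
  omega

/-- Key pointwise lemma: pairwise comparisons between the two sequences. -/
lemma key_pairs {N p q : ℕ} {y z : ℕ → ℤ} (hp1 : 1 ≤ p) (hpq : p < q) (hqN : q ≤ N)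
    (hyp : y p = -1) (hyq : y q = 1) (hzp : z p = 1) (hzq : z q = -1)
    (hoth : ∀ i, 1 ≤ i → i ≤ N → i ≠ p → i ≠ q → z i = y i ∧ (y i ≤ -2 ∨ 2 ≤ y i)) :
    ∀ i j, 1 ≤ i → i ≤ N → 1 ≤ j → j ≤ N → i < j →
      ((z i ≤ z j → y i ≤ y j) ∧ (y j < y i → z j < z i) ∧
       (j ≠ q → (y i ≤ y j → z i ≤ z j) ∧ (z j < z i → y j < y i))) := by
  intro i j hi1 hiN hj1 hjN hij
  rcases eq_or_ne i p with heq | hip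
  · have hyi : y i = -1 := by rw [heq, hyp]
    have hzi : z i = 1 := by rw [heq, hzp]
    rcases eq_or_ne j q with heq' | hjq
    · have hyj : y j = 1 := by rw [heq', hyq]
      have hzj : z j = -1 := by rw [heq', hzq]
      exact ⟨fun h => by omega, fun h => by omega, fun h => absurd heq' h⟩
    · have hjp : j ≠ p := by omega
      obtain ⟨hzj, hbj⟩ := hoth j hj1 hjN hjp hjq
      exact ⟨fun h => by omega, fun h => by omega,
        fun _ => ⟨fun h => by omega, fun h => by omega⟩⟩
  · rcases eq_or_ne i q with heq | hiq
    · have hyi : y i = 1 := by rw [heq, hyq]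
      have hzi : z i = -1 := by rw [heq, hzq]
      have hjp : j ≠ p := by omega
      have hjq : j ≠ q := by omega
      obtain ⟨hzj, hbj⟩ := hoth j hj1 hjN hjp hjq
      exact ⟨fun h => by omega, fun h => by omega,
        fun _ => ⟨fun h => by omega, fun h => by omega⟩⟩
    · obtain ⟨hzi, hbi⟩ := hoth i hi1 hiN hip hiq
      rcases eq_or_ne j p with heq | hjp
      · have hyj : y j = -1 := by rw [heq, hyp]
        have hzj : z j = 1 := by rw [heq, hzp]
        exact ⟨fun h => by omega, fun h => by omega,
          fun _ => ⟨fun h => by omega, fun h => by omega⟩⟩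
      · rcases eq_or_ne j q with heq | hjq
        · have hyj : y j = 1 := by rw [heq, hyq]
          have hzj : z j = -1 := by rw [heq, hzq]
          exact ⟨fun h => by omega, fun h => by omega, fun h => absurd heq h⟩
        · obtain ⟨hzj, hbj⟩ := hoth j hj1 hjN hjp hjq
          exact ⟨fun h => by omega, fun h => by omega,
            fun _ => ⟨fun h => by omega, fun h => by omega⟩⟩

/-- if `x` is a sequence of nonzero integers with pairwise distinct
absolute values containing the entry `1`, and `tx` is obtained from `x` by replacing
the entry `1` by `−1`, then `c_k(⁻x) − c_k(⁻tx) ∈ {0,1}` and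
`d_k(⁻x) − d_k(⁻tx) ∈ {0,−1}` for every `k ≥ 1`. -/
theorem greene_sign_flip (n : ℕ) (x : ℕ → ℤ)
    (hne : ∀ i, 1 ≤ i → i ≤ n → x i ≠ 0)
    (habs : ∀ i j, 1 ≤ i → i ≤ n → 1 ≤ j → j ≤ n → |x i| = |x j| → i = j)
    (h1 : ∃ i, 1 ≤ i ∧ i ≤ n ∧ x i = 1) :
    ∀ k, 1 ≤ k →
      ((greeneC (2 * n) (preMinus n x) k : ℤ) -
          (greeneC (2 * n) (preMinus n (fun i => if x i = 1 then -1 else x i)) k : ℤ) = 0 ∨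
        (greeneC (2 * n) (preMinus n x) k : ℤ) -
          (greeneC (2 * n) (preMinus n (fun i => if x i = 1 then -1 else x i)) k : ℤ) = 1) ∧
      ((greeneD (2 * n) (preMinus n x) k : ℤ) -
          (greeneD (2 * n) (preMinus n (fun i => if x i = 1 then -1 else x i)) k : ℤ) = 0 ∨
        (greeneD (2 * n) (preMinus n x) k : ℤ) -
          (greeneD (2 * n) (preMinus n (fun i => if x i = 1 then -1 else x i)) k : ℤ) = -1) := by
  obtain ⟨i0, hi01, hi0n, hx1⟩ := h1
  intro k hk
  set tx : ℕ → ℤ := fun i => if x i = 1 then -1 else x i with htx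
  set y : ℕ → ℤ := preMinus n x with hy
  set z : ℕ → ℤ := preMinus n tx with hz
  set p : ℕ := n + 1 - i0 with hp
  set q : ℕ := n + i0 with hq
  have hp1 : 1 ≤ p := by omega
  have hpn : p ≤ n := by omega
  have hpq : p < q := by omega
  have hqN : q ≤ 2 * n := by omega
  -- values at p and q
  have hidx : n + 1 - p = i0 := by omega
  have hyp : y p = -1 := by
    simp only [hy, preMinus, if_pos hpn, hidx, hx1]
  have hzp : z p = 1 := by
    simp only [hz, preMinus, if_pos hpn, hidx, htx, if_pos hx1, neg_neg]
  have hqn : ¬ q ≤ n := by omega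
  have hidx' : q - n = i0 := by omega
  have hyq : y q = 1 := by
    simp only [hy, preMinus, if_neg hqn, hidx', hx1]
  have hzq : z q = -1 := by
    simp only [hz, preMinus, if_neg hqn, hidx', htx, if_pos hx1]
  -- other positions
  have hbig : ∀ j, 1 ≤ j → j ≤ n → j ≠ i0 → (x j ≤ -2 ∨ 2 ≤ x j) ∧ tx j = x j := by
    intro j hj1 hjn hji0
    have h0 : x j ≠ 0 := hne j hj1 hjn
    have h1' : x j ≠ 1 := by
      intro h
      exact hji0 (habs j i0 hj1 hjn hi01 hi0n (by rw [h, hx1]))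
    have h1'' : x j ≠ -1 := by
      intro h
      exact hji0 (habs j i0 hj1 hjn hi01 hi0n (by rw [h, hx1]; rfl))
    exact ⟨by omega, by simp only [htx, if_neg h1']⟩
  have hoth : ∀ i, 1 ≤ i → i ≤ 2 * n → i ≠ p → i ≠ q →
      z i = y i ∧ (y i ≤ -2 ∨ 2 ≤ y i) := by
    intro i hi1 hiN hip hiq
    by_cases hin : i ≤ n
    · have hj1 : 1 ≤ n + 1 - i := by omega
      have hjn : n + 1 - i ≤ n := by omega
      have hji0 : n + 1 - i ≠ i0 := by omega
      obtain ⟨hb, ht⟩ := hbig (n + 1 - i) hj1 hjn hji0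
      constructor
      · simp only [hz, hy, preMinus, if_pos hin, ht]
      · simp only [hy, preMinus, if_pos hin]; omega
    · have hj1 : 1 ≤ i - n := by omega
      have hjn : i - n ≤ n := by omega
      have hji0 : i - n ≠ i0 := by omega
      obtain ⟨hb, ht⟩ := hbig (i - n) hj1 hjn hji0
      constructor
      · simp only [hz, hy, preMinus, if_neg hin, ht]
      · simp only [hy, preMinus, if_neg hin]; omega
  have hpairs := key_pairs hp1 hpq hqN hyp hyq hzp hzq hoth
  -- rewrite greene invariants as sSup of GSet
  have hC : ∀ w : ℕ → ℤ, greeneC (2 * n) w k = sSup (GSet (2 * n) k (fun i j => w i ≤ w j)) :=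
    fun w => rfl
  have hD : ∀ w : ℕ → ℤ, greeneD (2 * n) w k = sSup (GSet (2 * n) k (fun i j => w j < w i)) :=
    fun w => rfl
  have hC1 : sSup (GSet (2 * n) k (fun i j => z i ≤ z j)) ≤
      sSup (GSet (2 * n) k (fun i j => y i ≤ y j)) :=
    gset_le hk (fun i j hi1 hiN hj1 hjN hij h =>
      ((hpairs i j hi1 hiN hj1 hjN hij).1 h))
  have hC2 : sSup (GSet (2 * n) k (fun i j => y i ≤ y j)) ≤
      sSup (GSet (2 * n) k (fun i j => z i ≤ z j)) + 1 :=
    gset_le_add_one hk (fun i j hi1 hiN hj1 hjN hij hjq h =>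
      (((hpairs i j hi1 hiN hj1 hjN hij).2.2 hjq).1 h))
  have hD1 : sSup (GSet (2 * n) k (fun i j => y j < y i)) ≤
      sSup (GSet (2 * n) k (fun i j => z j < z i)) :=
    gset_le hk (fun i j hi1 hiN hj1 hjN hij h =>
      ((hpairs i j hi1 hiN hj1 hjN hij).2.1 h))
  have hD2 : sSup (GSet (2 * n) k (fun i j => z j < z i)) ≤
      sSup (GSet (2 * n) k (fun i j => y j < y i)) + 1 :=
    gset_le_add_one hk (fun i j hi1 hiN hj1 hjN hij hjq h =>
      (((hpairs i j hi1 hiN hj1 hjN hij).2.2 hjq).2 h))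
  rw [hC y, hC z, hD y, hD z]
  constructor
  · omega
  · omega
end

section
/- Let Φ be a finite crystallographic root system in a real inner product space, with Weyl group W, a fixed base Δ, positive roots Φ⁺, and ⟨λ, α∨⟩ = 2(λ,α)/(α,α). Let μ be an integral antidominant weight, i.e., ⟨μ, α∨⟩ is a nonpositive integer for every α ∈ Φ⁺, and set J = {α ∈ Δ : ⟨μ, α∨⟩ = 0}. Then for any w ∈ W the following are equivalent: (a) wγ ∈ Φ⁺ for all γ ∈ J; (b) for every α ∈ Φ⁺, if w⁻¹α ∈ −Φ⁺ then ⟨wμ, α∨⟩ > 0, and if w⁻¹α ∈ Φ⁺ then ⟨wμ, α∨⟩ ≤ 0; (c) {α ∈ Φ⁺ : ⟨wμ, α∨⟩ > 0} = {α ∈ Φ⁺ : w⁻¹α ∈ −Φ⁺}. -/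
/-- The pairing `⟨x, α∨⟩ = 2(x,α)/(α,α)` in a real inner product space. -/
noncomputable def pairing {E : Type*} [NormedAddCommGroup E] [InnerProductSpace ℝ E]
    (x α : E) : ℝ :=
  2 * (inner ℝ x α : ℝ) / (inner ℝ α α : ℝ)

/-!
Since `W` acts by isometries preserving `Φ`, `⟨wμ, α∨⟩ = ⟨μ, (w⁻¹α)∨⟩`, which is `≤ 0` when `w⁻¹α`
is positive because `μ` is antidominant. When `w⁻¹α = -β` with `β` positive, the pairing is
`-⟨μ, β∨⟩ ≥ 0`, and if it vanishes then `β` lies in the cone spanned by `J`, since the hyperplane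
`μ⊥` meets the cone spanned by `Δ` in a face. If `w` maps `J` into `Φ⁺`, it then maps `β` into the
cone spanned by `Δ`; this cone is salient (`Δ` is linearly independent), so the root `wβ = -α` would
be positive. Conversely, for `γ ∈ J` with `wγ` negative, `α = -wγ` violates (b). Condition (c) is a
reformulation of (b), as every root is either positive or negative.
-/

section Cone

variable {𝕜 E : Type*} [Field 𝕜] [LinearOrder 𝕜] [IsStrictOrderedRing 𝕜]
  [AddCommGroup E] [Module 𝕜 E]

theorem PointedCone.eq_zero_of_mem_hull_of_neg_mem_hull {s : Set E} (hs : LinearIndepOn 𝕜 id s)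
    {x : E} (hx : x ∈ PointedCone.hull 𝕜 s) (hnx : -x ∈ PointedCone.hull 𝕜 s) : x = 0 := by
  obtain ⟨c, hcs, hc, rfl⟩ := PointedCone.mem_hull_set.mp hx
  obtain ⟨d, hds, hd, hdx⟩ := PointedCone.mem_hull_set.mp hnx
  have hcd : c + d = 0 := by
    refine linearIndepOn_iff.mp hs _
      (add_mem ((Finsupp.mem_supported _ _).mpr hcs) ((Finsupp.mem_supported _ _).mpr hds)) ?_
    simp only [map_add, Finsupp.linearCombination_apply, id, hdx, add_neg_cancel]
  have hc0 : c = 0 := by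
    ext γ
    have hγ : c γ + d γ = 0 := by simpa using DFunLike.congr_fun hcd γ
    rw [Finsupp.zero_apply]
    linarith [hc γ, hd γ]
  simp [hc0]

theorem PointedCone.mem_hull_setOf_eq_zero_of_mem_hull {s : Set E} {f : E →ₗ[𝕜] 𝕜}
    (hf : ∀ y ∈ s, f y ≤ 0) {x : E} (hx : x ∈ PointedCone.hull 𝕜 s) (hfx : f x = 0) :
    x ∈ PointedCone.hull 𝕜 {y ∈ s | f y = 0} := by
  -- `f ≤ 0` on the cone, so a sum or positive multiple with `f = 0` has all its parts on `f = 0`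
  have key : ∀ x ∈ PointedCone.hull 𝕜 s,
      f x ≤ 0 ∧ (f x = 0 → x ∈ PointedCone.hull 𝕜 {y ∈ s | f y = 0}) := by
    intro x hx
    induction hx using Submodule.span_induction with
    | mem y hy => exact ⟨hf y hy, fun hfy => Submodule.subset_span ⟨hy, hfy⟩⟩
    | zero => exact ⟨by simp, fun _ => zero_mem _⟩
    | add y z _ _ hy hz =>
      rw [map_add]
      refine ⟨add_nonpos hy.1 hz.1, fun hyz => add_mem (hy.2 ?_) (hz.2 ?_)⟩ <;>
        linarith [hy.1, hz.1]
    | smul t y _ hy =>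
      have hft : f (t • y) = t * f y := map_smul f (t : 𝕜) y
      rw [hft]
      refine ⟨mul_nonpos_of_nonneg_of_nonpos t.2 hy.1, fun h => ?_⟩
      rcases mul_eq_zero.mp h with ht | hfy
      · simp [show t = 0 from Subtype.ext ht]
      · exact Submodule.smul_mem _ t (hy.2 hfy)
  exact (key x hx).2 hfx

theorem PointedCone.finsum_natCast_smul_mem_hull {s : Set E} {c : E → ℕ}
    (hc : ∀ γ, c γ ≠ 0 → γ ∈ s) :
    ∑ᶠ γ, (c γ : 𝕜) • γ ∈ PointedCone.hull 𝕜 s := by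
  refine finsum_induction (· ∈ PointedCone.hull 𝕜 s) (zero_mem _) (fun _ _ => add_mem) fun γ => ?_
  rw [Nat.cast_smul_eq_nsmul]
  by_cases hγ : c γ = 0
  · simp [hγ]
  · exact nsmul_mem (PointedCone.subset_hull (hc γ hγ)) _

variable {Φ Φpos Δ : Set E}

theorem mem_pos_of_mem_hull (h0 : (0 : E) ∉ Φ) (hsplit : ∀ α ∈ Φ, (α ∈ Φpos ↔ -α ∉ Φpos))
    (hpos : Φpos ⊆ PointedCone.hull 𝕜 Δ) (hind : LinearIndepOn 𝕜 id Δ) {α : E} (hα : α ∈ Φ)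
    (hαΔ : α ∈ PointedCone.hull 𝕜 Δ) : α ∈ Φpos := by
  by_contra hα'
  have hnα : -α ∈ Φpos := not_not.mp (mt (hsplit α hα).mpr hα')
  exact h0 (PointedCone.eq_zero_of_mem_hull_of_neg_mem_hull hind hαΔ (hpos hnα) ▸ hα)

theorem map_mem_pos_of_eq_zero (h0 : (0 : E) ∉ Φ) (hsplit : ∀ α ∈ Φ, (α ∈ Φpos ↔ -α ∉ Φpos))
    (hposs : Φpos ⊆ Φ) (hpos : Φpos ⊆ PointedCone.hull 𝕜 Δ) (hind : LinearIndepOn 𝕜 id Δ)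
    {w : E →ₗ[𝕜] E} (hwΦ : ∀ β ∈ Φ, w β ∈ Φ) {f : E →ₗ[𝕜] 𝕜} (hf : ∀ γ ∈ Δ, f γ ≤ 0)
    (hfw : ∀ γ ∈ Δ, f γ = 0 → w γ ∈ Φpos) {β : E} (hβ : β ∈ Φpos) (hfβ : f β = 0) :
    w β ∈ Φpos := by
  have hβJ := PointedCone.mem_hull_setOf_eq_zero_of_mem_hull hf (hpos hβ) hfβ
  have hJ : PointedCone.hull 𝕜 {γ ∈ Δ | f γ = 0} ≤ (PointedCone.hull 𝕜 Δ).comap w :=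
    Submodule.span_le.mpr fun γ hγ => hpos (hfw γ hγ.1 hγ.2)
  exact mem_pos_of_mem_hull h0 hsplit hpos hind (hwΦ β (hposs hβ)) (hJ hβJ)

end Cone

open scoped RealInnerProductSpace

section Pairing

variable {E : Type*} [NormedAddCommGroup E] [InnerProductSpace ℝ E]

theorem pairing_neg_right (x α : E) : pairing x (-α) = -pairing x α := by
  simp only [pairing, inner_neg_right, inner_neg_left, neg_neg]
  ring

theorem pairing_nonpos_iff {x α : E} : pairing x α ≤ 0 ↔ ⟪x, α⟫ ≤ 0 := by
  rcases eq_or_ne α 0 with rfl | hα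
  · simp [pairing]
  rw [pairing, div_le_iff₀ (real_inner_self_pos.mpr hα), zero_mul]
  constructor <;> intro <;> linarith

theorem pairing_eq_zero_iff {x α : E} : pairing x α = 0 ↔ ⟪x, α⟫ = 0 := by
  rcases eq_or_ne α 0 with rfl | hα
  · simp [pairing]
  simp [pairing, hα]

theorem pairing_map_map {g : E → E} (hg : ∀ x y, ⟪g x, g y⟫ = ⟪x, y⟫) (x α : E) :
    pairing (g x) (g α) = pairing x α := by
  simp only [pairing, hg]

theorem inner_sub_pairing_smul_sub_pairing_smul (α x y : E) :
    ⟪x - pairing x α • α, y - pairing y α • α⟫ = ⟪x, y⟫ := by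
  rcases eq_or_ne α 0 with rfl | hα
  · simp
  have := (real_inner_self_pos.mpr hα).ne'
  simp only [pairing, inner_sub_left, inner_sub_right, real_inner_smul_left,
    real_inner_smul_right, real_inner_comm α]
  field_simp
  ring

theorem sub_pairing_smul_sub_pairing_smul (α v : E) :
    (v - pairing v α • α) - pairing (v - pairing v α • α) α • α = v := by
  rcases eq_or_ne α 0 with rfl | hα
  · simp
  have := (real_inner_self_pos.mpr hα).ne'
  have hp : pairing (v - pairing v α • α) α = -pairing v α := by
    simp only [pairing, inner_sub_left, real_inner_smul_left]
    field_simp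
    ring
  rw [hp, neg_smul, sub_neg_eq_add, sub_add_cancel]

def rootReflections (Φ : Set E) : Set (E ≃ₗ[ℝ] E) :=
  {s | ∃ α ∈ Φ, ∀ v, s v = v - pairing v α • α}

theorem inner_map_map_of_mem_closure_rootReflections {Φ : Set E} {g : E ≃ₗ[ℝ] E}
    (hg : g ∈ Subgroup.closure (rootReflections Φ)) (x y : E) : ⟪g x, g y⟫ = ⟪x, y⟫ := by
  induction hg using Subgroup.closure_induction generalizing x y with
  | mem s hs =>
    obtain ⟨α, -, hs⟩ := hs
    rw [hs, hs, inner_sub_pairing_smul_sub_pairing_smul]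
  | one => rfl
  | mul a b _ _ ha hb => exact (ha (b x) (b y)).trans (hb x y)
  | inv a _ ha =>
    rw [← ha]
    simp

theorem map_mem_iff_of_mem_closure_rootReflections {Φ : Set E}
    (hrefl : ∀ α ∈ Φ, ∀ β ∈ Φ, β - pairing β α • α ∈ Φ) {g : E ≃ₗ[ℝ] E}
    (hg : g ∈ Subgroup.closure (rootReflections Φ)) (β : E) : g β ∈ Φ ↔ β ∈ Φ := by
  induction hg using Subgroup.closure_induction generalizing β with
  | mem s hs =>
    obtain ⟨α, hα, hs⟩ := hs
    refine ⟨fun h => ?_, fun h => hs β ▸ hrefl α hα β h⟩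
    have := hrefl α hα _ h
    rwa [hs, sub_pairing_smul_sub_pairing_smul] at this
  | one => rfl
  | mul a b _ _ ha hb => exact (ha (b β)).trans (hb β)
  | inv a _ ha =>
    rw [← ha]
    simp

theorem pairing_apply_left_of_mem_closure_rootReflections {Φ : Set E} {g : E ≃ₗ[ℝ] E}
    (hg : g ∈ Subgroup.closure (rootReflections Φ)) (x α : E) :
    pairing (g x) α = pairing x (g.symm α) := by
  simpa using pairing_map_map (inner_map_map_of_mem_closure_rootReflections hg) x (g.symm α)

end Pairing

theorem upper_closure_characterization_general
    {E : Type*} [NormedAddCommGroup E] [InnerProductSpace ℝ E]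
    (Φ Φpos Δ : Set E)
    (h0 : (0 : E) ∉ Φ)
    (hposs : Φpos ⊆ Φ)
    (hsplit : ∀ α ∈ Φ, (α ∈ Φpos ↔ -α ∉ Φpos))
    (hΔ : Δ ⊆ Φpos)
    (hind : LinearIndependent ℝ (fun γ : Δ => (γ : E)))
    (hbase : ∀ α ∈ Φpos, ∃ c : E → ℕ, (∀ γ, c γ ≠ 0 → γ ∈ Δ) ∧
      α = ∑ᶠ γ, (c γ : ℝ) • γ)
    (hrefl : ∀ α ∈ Φ, ∀ β ∈ Φ, β - pairing β α • α ∈ Φ)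
    (W : Subgroup (E ≃ₗ[ℝ] E))
    (hW : W = Subgroup.closure
      {s : E ≃ₗ[ℝ] E | ∃ α ∈ Φ, ∀ v, s v = v - pairing v α • α})
    (w : E ≃ₗ[ℝ] E) (hw : w ∈ W)
    (μ : E) (hμ : ∀ α ∈ Φpos, ∃ k : ℤ, k ≤ 0 ∧ pairing μ α = (k : ℝ))
    (J : Set E) (hJ : J = {γ ∈ Δ | pairing μ γ = 0}) :
    ((∀ γ ∈ J, w γ ∈ Φpos) ↔
      (∀ α ∈ Φpos, (-(w.symm α) ∈ Φpos → 0 < pairing (w μ) α) ∧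
        (w.symm α ∈ Φpos → pairing (w μ) α ≤ 0))) ∧
    ((∀ γ ∈ J, w γ ∈ Φpos) ↔
      {α ∈ Φpos | 0 < pairing (w μ) α} = {α ∈ Φpos | -(w.symm α) ∈ Φpos}) := by
  subst hJ
  have hw' : w ∈ Subgroup.closure (rootReflections Φ) := hW ▸ hw
  have hΦ := map_mem_iff_of_mem_closure_rootReflections hrefl hw'
  have hpair := pairing_apply_left_of_mem_closure_rootReflections hw' μ
  have hμ' {α : E} (hα : α ∈ Φpos) : pairing μ α ≤ 0 := by
    obtain ⟨k, hk, hμα⟩ := hμ α hα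
    rw [hμα]
    exact_mod_cast hk
  have hpos : Φpos ⊆ PointedCone.hull ℝ Δ := fun α hα => by
    obtain ⟨c, hc, rfl⟩ := hbase α hα
    exact PointedCone.finsum_natCast_smul_mem_hull hc
  have hbc : (∀ α ∈ Φpos, (-(w.symm α) ∈ Φpos → 0 < pairing (w μ) α) ∧
        (w.symm α ∈ Φpos → pairing (w μ) α ≤ 0)) ↔
      {α ∈ Φpos | 0 < pairing (w μ) α} = {α ∈ Φpos | -(w.symm α) ∈ Φpos} := by
    simp only [Set.ext_iff, Set.mem_ofPred_eq, and_congr_right_iff]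
    refine forall₂_congr fun α hα => ?_
    rw [← not_lt, hsplit (w.symm α) ((hΦ _).mp (by simpa using hposs hα))]
    tauto
  rw [← hbc, and_self]
  refine ⟨fun ha α hα => ⟨fun hneg => ?_, fun h => hpair α ▸ hμ' h⟩, fun hb γ hγ => ?_⟩
  · rw [hpair, ← neg_neg (w.symm α), pairing_neg_right, neg_pos]
    refine (hμ' hneg).lt_of_ne fun hzero => (hsplit α (hposs hα)).mp hα ?_
    simpa using map_mem_pos_of_eq_zero h0 hsplit hposs hpos hind (w := w.toLinearMap)
      (f := innerₛₗ ℝ μ) (fun β hβ => (hΦ β).mpr hβ)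
      (fun γ hγ => pairing_nonpos_iff.mp (hμ' (hΔ hγ)))
      (fun γ hγ hγ0 => ha γ ⟨hγ, pairing_eq_zero_iff.mpr hγ0⟩) hneg (pairing_eq_zero_iff.mp hzero)
  · by_contra hwγ
    have hn : -(w γ) ∈ Φpos := not_not.mp (mt (hsplit _ ((hΦ γ).mpr (hposs (hΔ hγ.1)))).mpr hwγ)
    have := (hb _ hn).1 (by simpa using hΔ hγ.1)
    simp [hpair, pairing_neg_right, hγ.2] at this

/-- for a finite crystallographic root system `Φ` with positive system
`Φpos`, base `Δ`, Weyl group `W` (generated by the reflections in the roots), an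
integral antidominant weight `μ` and `J = {α ∈ Δ : ⟨μ,α∨⟩ = 0}`, the conditions
(a) `wγ ∈ Φ⁺` for all `γ ∈ J`;
(b) for all `α ∈ Φ⁺`: `w⁻¹α ∈ −Φ⁺ → ⟨wμ,α∨⟩ > 0` and `w⁻¹α ∈ Φ⁺ → ⟨wμ,α∨⟩ ≤ 0`;
(c) `{α ∈ Φ⁺ : ⟨wμ,α∨⟩ > 0} = {α ∈ Φ⁺ : w⁻¹α ∈ −Φ⁺}`
are equivalent. -/
theorem upper_closure_characterization
    {E : Type*} [NormedAddCommGroup E] [InnerProductSpace ℝ E]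
    (Φ Φpos Δ : Set E)
    (hfin : Φ.Finite)
    (h0 : (0 : E) ∉ Φ)
    (hposs : Φpos ⊆ Φ)
    (hnegmem : ∀ α ∈ Φ, -α ∈ Φ)
    (hsplit : ∀ α ∈ Φ, (α ∈ Φpos ↔ -α ∉ Φpos))
    (hΔ : Δ ⊆ Φpos)
    (hind : LinearIndependent ℝ (fun γ : Δ => (γ : E)))
    (hbase : ∀ α ∈ Φpos, ∃ c : E → ℕ, (∀ γ, c γ ≠ 0 → γ ∈ Δ) ∧
      α = ∑ᶠ γ, (c γ : ℝ) • γ)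
    (hcrys : ∀ α ∈ Φ, ∀ β ∈ Φ, ∃ k : ℤ, pairing β α = (k : ℝ))
    (hrefl : ∀ α ∈ Φ, ∀ β ∈ Φ, β - pairing β α • α ∈ Φ)
    (W : Subgroup (E ≃ₗ[ℝ] E))
    (hW : W = Subgroup.closure
      {s : E ≃ₗ[ℝ] E | ∃ α ∈ Φ, ∀ v, s v = v - pairing v α • α})
    (w : E ≃ₗ[ℝ] E) (hw : w ∈ W)
    (μ : E) (hμ : ∀ α ∈ Φpos, ∃ k : ℤ, k ≤ 0 ∧ pairing μ α = (k : ℝ))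
    (J : Set E) (hJ : J = {γ ∈ Δ | pairing μ γ = 0}) :
    ((∀ γ ∈ J, w γ ∈ Φpos) ↔
      (∀ α ∈ Φpos, (-(w.symm α) ∈ Φpos → 0 < pairing (w μ) α) ∧
        (w.symm α ∈ Φpos → pairing (w μ) α ≤ 0))) ∧
    ((∀ γ ∈ J, w γ ∈ Φpos) ↔
      {α ∈ Φpos | 0 < pairing (w μ) α} = {α ∈ Φpos | -(w.symm α) ∈ Φpos}) :=
  upper_closure_characterization_general Φ Φpos Δ h0 hposs hsplit hΔ hind hbase hrefl W hW w hw μ hμ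
    J hJ
end
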